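/- Let u and ξ be smooth vector fields on ℝ^n and suppose u is covariantly constant, i.e. u^k_{|j} = 0 identically for all j, k. Then the deviation equation reduces pointwise to: u^j (u^i ξ^k_{|i})_{|j} = R^k_{ijl} u^i u^j ξ^l + u^n (W^k)_{|n}, where W is the vector field W^k := T^k_{jl} u^j ξ^l − (£_ξ u)^k. -/

import Mathlib

open scoped BigOperators

noncomputable section

/-- Partial derivative `∂_j f` of a scalar function on `ℝ^n`. -/
def pd {n : ℕ} (j : Fin n) (f : (Fin n → ℝ) → ℝ) (x : Fin n → ℝ) : ℝ :=
  fderiv ℝ f x (Pi.single j 1)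

/-- Covariant derivative of a vector field: `ξ^k_{|j} = ∂_j ξ^k + Γ^k_{mj} ξ^m`. -/
def covV {n : ℕ} (Γ : Fin n → Fin n → Fin n → (Fin n → ℝ) → ℝ)
    (ξ : Fin n → (Fin n → ℝ) → ℝ) (k j : Fin n) (x : Fin n → ℝ) : ℝ :=
  pd j (ξ k) x + ∑ m, Γ k m j x * ξ m x

/-- Covariant derivative of a (1,1)-tensor field:
`A^k_{i|j} = ∂_j A^k_i + Γ^k_{mj} A^m_i − Γ^m_{ij} A^k_m`. -/
def covT {n : ℕ} (Γ : Fin n → Fin n → Fin n → (Fin n → ℝ) → ℝ)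
    (A : Fin n → Fin n → (Fin n → ℝ) → ℝ) (k i j : Fin n) (x : Fin n → ℝ) : ℝ :=
  pd j (A k i) x + ∑ m, Γ k m j x * A m i x - ∑ m, Γ m i j x * A k m x

/-- Curvature tensor
`R^k_{ijl} = ∂_j Γ^k_{il} − ∂_l Γ^k_{ij} + Γ^n_{il} Γ^k_{nj} − Γ^n_{ij} Γ^k_{nl}`. -/
def curv {n : ℕ} (Γ : Fin n → Fin n → Fin n → (Fin n → ℝ) → ℝ)
    (k i j l : Fin n) (x : Fin n → ℝ) : ℝ :=
  pd j (Γ k i l) x - pd l (Γ k i j) x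
    + ∑ m, Γ m i l x * Γ k m j x - ∑ m, Γ m i j x * Γ k m l x

/-- Torsion tensor `T^k_{ij} = Γ^k_{ji} − Γ^k_{ij}`. -/
def tor {n : ℕ} (Γ : Fin n → Fin n → Fin n → (Fin n → ℝ) → ℝ)
    (k i j : Fin n) (x : Fin n → ℝ) : ℝ :=
  Γ k j i x - Γ k i j x

/-- Lie derivative of a vector field: `(£_ξ u)^k = ξ^j ∂_j u^k − u^j ∂_j ξ^k`. -/
def lieV {n : ℕ} (ξ u : Fin n → (Fin n → ℝ) → ℝ) (k : Fin n) (x : Fin n → ℝ) : ℝ :=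
  ∑ j, ξ j x * pd j (u k) x - ∑ j, u j x * pd j (ξ k) x

/-- Lie derivative of a (1,1)-tensor field:
`(£_ξ A)^k_i = ξ^m ∂_m A^k_i − A^m_i ∂_m ξ^k + A^k_m ∂_i ξ^m`. -/
def lieT {n : ℕ} (ξ : Fin n → (Fin n → ℝ) → ℝ)
    (A : Fin n → Fin n → (Fin n → ℝ) → ℝ) (k i : Fin n) (x : Fin n → ℝ) : ℝ :=
  ∑ m, ξ m x * pd m (A k i) x - ∑ m, A m i x * pd m (ξ k) x
    + ∑ m, A k m x * pd i (ξ m) x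

/-- Lie derivative of the connection coefficients:
`£_ξ Γ^k_{ij} = ∂_j ∂_i ξ^k + ξ^m ∂_m Γ^k_{ij} − Γ^m_{ij} ∂_m ξ^k
  + Γ^k_{mj} ∂_i ξ^m + Γ^k_{im} ∂_j ξ^m`. -/
def lieC {n : ℕ} (ξ : Fin n → (Fin n → ℝ) → ℝ)
    (Γ : Fin n → Fin n → Fin n → (Fin n → ℝ) → ℝ)
    (k i j : Fin n) (x : Fin n → ℝ) : ℝ :=
  pd j (fun y => pd i (ξ k) y) x + ∑ m, ξ m x * pd m (Γ k i j) x
    - ∑ m, Γ m i j x * pd m (ξ k) x + ∑ m, Γ k m j x * pd i (ξ m) x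
    + ∑ m, Γ k i m x * pd j (ξ m) x

section AuxPD

variable {n : ℕ}

lemma pd_neg' {f : (Fin n → ℝ) → ℝ} {j : Fin n} {x : Fin n → ℝ} :
    pd j (fun y => -f y) x = -pd j f x := by
  simp [pd, fderiv_neg]

lemma pd_sum' {ι : Type*} {s : Finset ι} {F : ι → (Fin n → ℝ) → ℝ} {j : Fin n} {x : Fin n → ℝ}
    (h : ∀ i ∈ s, DifferentiableAt ℝ (F i) x) :
    pd j (fun y => ∑ i ∈ s, F i y) x = ∑ i ∈ s, pd j (F i) x := by
  simp [pd, fderiv_fun_sum h]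

lemma pd_mul' {f g : (Fin n → ℝ) → ℝ} {j : Fin n} {x : Fin n → ℝ}
    (hf : DifferentiableAt ℝ f x) (hg : DifferentiableAt ℝ g x) :
    pd j (fun y => f y * g y) x = pd j f x * g x + f x * pd j g x := by
  simp [pd, fderiv_fun_mul hf hg]; ring

lemma pd_comm' {f : (Fin n → ℝ) → ℝ} (hf : ContDiff ℝ (⊤ : ℕ∞) f) (i j : Fin n) (x : Fin n → ℝ) :
    pd i (pd j f) x = pd j (pd i f) x := by
  have hd : DifferentiableAt ℝ (fderiv ℝ f) x :=
    ((hf.fderiv_right (m := 1) (by exact WithTop.coe_le_coe.mpr le_top)).differentiable one_ne_zero) x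
  have hsym : IsSymmSndFDerivAt ℝ f x :=
    hf.contDiffAt.isSymmSndFDerivAt (by simp only [minSmoothness_of_isRCLikeNormedField]; exact WithTop.coe_le_coe.mpr (le_top : (2 : ℕ∞) ≤ ⊤))
  have key : ∀ v w : Fin n → ℝ,
      fderiv ℝ (fun y => fderiv ℝ f y v) x w = fderiv ℝ (fderiv ℝ f) x w v := by
    intro v w
    rw [fderiv_clm_apply hd (differentiableAt_const v)]
    simp
  have e1 : pd j f = fun y => fderiv ℝ f y (Pi.single j 1) := rfl
  have e2 : pd i f = fun y => fderiv ℝ f y (Pi.single i 1) := rfl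
  simp only [pd, e1, e2]
  rw [key, key, hsym.eq]

end AuxPD

/-- deviation equation for a covariantly constant `u`
(`u^k_{|j} = 0`):
`u^j (u^i ξ^k_{|i})_{|j} = R^k_{ijl} u^i u^j ξ^l + u^n (W^k)_{|n}`,
where `W^k := T^k_{jl} u^j ξ^l − (£_ξ u)^k`. -/
theorem deviation_covariantly_constant {n : ℕ} (hn : 0 < n)
    (Γ : Fin n → Fin n → Fin n → (Fin n → ℝ) → ℝ)
    (u ξ : Fin n → (Fin n → ℝ) → ℝ)
    (hΓ : ∀ k i j, ContDiff ℝ (⊤ : ℕ∞) (Γ k i j))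
    (hu : ∀ k, ContDiff ℝ (⊤ : ℕ∞) (u k))
    (hξ : ∀ k, ContDiff ℝ (⊤ : ℕ∞) (ξ k))
    (hcc : ∀ (x : Fin n → ℝ) (k j : Fin n), covV Γ u k j x = 0) :
    ∀ (x : Fin n → ℝ) (k : Fin n),
      (∑ j, u j x * covV Γ (fun k y => ∑ i, u i y * covV Γ ξ k i y) k j x) =
        (∑ i, ∑ j, ∑ l, curv Γ k i j l x * u i x * u j x * ξ l x)
          + (∑ m, u m x * covV Γ
              (fun k y => (∑ j, ∑ l, tor Γ k j l y * u j y * ξ l y) - lieV ξ u k y)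
              k m x) := by
  intro x k
  -- pointwise consequence of covariant constancy
  have hd : ∀ (y : Fin n → ℝ) (k j : Fin n),
      pd j (u k) y = -∑ m, Γ k m j y * u m y := by
    intro y k j
    have h := hcc y k j
    simp only [covV] at h
    linarith
  have h1 : ∀ (k j : Fin n), pd j (u k) = fun y => -∑ m, Γ k m j y * u m y := by
    intro k j; funext y; exact hd y k j
  have h2 : ∀ (k j l : Fin n),
      pd l (pd j (u k)) x
        = ∑ m, (-(pd l (Γ k m j) x * u m x) + Γ k m j x * ∑ p, Γ m p l x * u p x) := by
    intro k j l
    rw [h1 k j, pd_neg', pd_sum' (fun m _ =>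
      (((hΓ k m j).differentiable (by simp)) x).fun_mul (((hu m).differentiable (by simp)) x)),
      ← Finset.sum_neg_distrib]
    refine Finset.sum_congr rfl fun m _ => ?_
    rw [pd_mul' (((hΓ k m j).differentiable (by simp)) x) (((hu m).differentiable (by simp)) x),
        hd x m l]
    ring
  -- Ricci identity: R^k_{ijl} u^i = 0
  have h4 : ∀ (k j l : Fin n), ∑ i, curv Γ k i j l x * u i x = 0 := by
    intro k j l
    have hs : (∑ m, (-(pd l (Γ k m j) x * u m x) + Γ k m j x * ∑ p, Γ m p l x * u p x))
        = ∑ m, (-(pd j (Γ k m l) x * u m x) + Γ k m l x * ∑ p, Γ m p j x * u p x) :=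
      (h2 k j l).symm.trans ((pd_comm' (hu k) l j x).trans (h2 k l j))
    simp only [Finset.sum_add_distrib, Finset.sum_neg_distrib] at hs
    have hsplit : ∑ i, curv Γ k i j l x * u i x
        = (∑ i, pd j (Γ k i l) x * u i x) - (∑ i, pd l (Γ k i j) x * u i x)
          + (∑ i, (∑ m, Γ m i l x * Γ k m j x) * u i x)
          - (∑ i, (∑ m, Γ m i j x * Γ k m l x) * u i x) := by
      simp only [curv, sub_mul, add_mul, Finset.sum_add_distrib, Finset.sum_sub_distrib]
    have hq1 : ∑ i, (∑ m, Γ m i l x * Γ k m j x) * u i x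
        = ∑ m, Γ k m j x * ∑ p, Γ m p l x * u p x := by
      simp only [Finset.sum_mul]
      rw [Finset.sum_comm]
      refine Finset.sum_congr rfl fun m _ => ?_
      rw [Finset.mul_sum]
      exact Finset.sum_congr rfl fun p _ => by ring
    have hq2 : ∑ i, (∑ m, Γ m i j x * Γ k m l x) * u i x
        = ∑ m, Γ k m l x * ∑ p, Γ m p j x * u p x := by
      simp only [Finset.sum_mul]
      rw [Finset.sum_comm]
      refine Finset.sum_congr rfl fun m _ => ?_
      rw [Finset.mul_sum]
      exact Finset.sum_congr rfl fun p _ => by ring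
    rw [hsplit, hq1, hq2]
    linarith
  -- the curvature term vanishes
  have h5 : (∑ i, ∑ j, ∑ l, curv Γ k i j l x * u i x * u j x * ξ l x) = 0 := by
    rw [Finset.sum_comm]
    refine Finset.sum_eq_zero fun j _ => ?_
    rw [Finset.sum_comm]
    refine Finset.sum_eq_zero fun l _ => ?_
    have : ∑ i, curv Γ k i j l x * u i x * u j x * ξ l x
        = (∑ i, curv Γ k i j l x * u i x) * (u j x * ξ l x) := by
      rw [Finset.sum_mul]
      exact Finset.sum_congr rfl fun i _ => by ring
    rw [this, h4 k j l, zero_mul]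
  -- W coincides with the inner field u^i ξ^k_{|i}
  have hW : (fun k y => (∑ j, ∑ l, tor Γ k j l y * u j y * ξ l y) - lieV ξ u k y)
      = fun k y => ∑ i, u i y * covV Γ ξ k i y := by
    funext k y
    simp only [tor, lieV, covV, hd y]
    have e0 : ∑ j, ∑ l, (Γ k l j y - Γ k j l y) * u j y * ξ l y
        = (∑ j, ∑ l, Γ k l j y * u j y * ξ l y)
          - ∑ j, ∑ l, Γ k j l y * u j y * ξ l y := by
      rw [← Finset.sum_sub_distrib]
      refine Finset.sum_congr rfl fun j _ => ?_
      rw [← Finset.sum_sub_distrib]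
      exact Finset.sum_congr rfl fun l _ => by ring
    have e1 : ∑ j, ∑ l, Γ k l j y * u j y * ξ l y
        = ∑ i, u i y * ∑ m, Γ k m i y * ξ m y := by
      refine Finset.sum_congr rfl fun i _ => ?_
      rw [Finset.mul_sum]
      exact Finset.sum_congr rfl fun m _ => by ring
    have e2 : ∑ j, ∑ l, Γ k j l y * u j y * ξ l y
        = ∑ j, ξ j y * ∑ m, Γ k m j y * u m y := by
      rw [Finset.sum_comm]
      refine Finset.sum_congr rfl fun l _ => ?_
      rw [Finset.mul_sum]
      exact Finset.sum_congr rfl fun m _ => by ring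
    have e3 : ∑ j, ξ j y * -∑ m, Γ k m j y * u m y
        = -∑ j, ξ j y * ∑ m, Γ k m j y * u m y := by
      simp only [mul_neg, Finset.sum_neg_distrib]
    have e4 : ∑ i, u i y * (pd i (ξ k) y + ∑ m, Γ k m i y * ξ m y)
        = (∑ i, u i y * pd i (ξ k) y) + ∑ i, u i y * ∑ m, Γ k m i y * ξ m y := by
      rw [← Finset.sum_add_distrib]
      exact Finset.sum_congr rfl fun i _ => by ring
    rw [e0, e1, e2, e3, e4]
    ring
  rw [hW, h5, zero_add]
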